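/- Under the hypotheses that σ_min(Λᵀ Σ_u⁻¹ Λ) ≥ c₀ ψ and ‖Λᵀ Σ_u⁻¹ Λ‖ ≤ C₀ ψ with ψ > 0, Σ_f positive definite with ‖Σ_f‖ ≤ C and ‖Σ_f⁻¹‖ ≤ C, and ‖ρ‖ ≤ C, the quantity V₁ := (ρ − Λᵀβ)ᵀ Σ_f (ρ − Λᵀβ), where β = Σ_u⁻¹ Λ (Σ_f⁻¹ + Λᵀ Σ_u⁻¹ Λ)⁻¹ ρ, satisfies V₁ ≤ C' / ψ² for a constant C' depending only on c₀, C₀, C. -/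

import Mathlib

open Matrix

/-!
Write `M = Σ_f⁻¹ + ΛᵀΣ_u⁻¹Λ` and `w = M⁻¹ρ`. Since `Λᵀβ = ΛᵀΣ_u⁻¹Λ w = ρ - Σ_f⁻¹w`, the residual is
`Σ_f⁻¹w` and `V₁ = wᵀΣ_f⁻¹w ≤ C‖w‖²`. The lower bound on `ΛᵀΣ_u⁻¹Λ` makes `M` coercive with constant
`c₀ψ`, and by Cauchy–Schwarz a coercive matrix satisfies `c₀ψ‖w‖ ≤ ‖Mw‖ = ‖ρ‖ ≤ C`.
-/

namespace Matrix

theorem sub_mulVec_inv_add_mulVec {n R : Type*} [Fintype n] [DecidableEq n] [CommRing R]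
    {A B : Matrix n n R} (h : IsUnit (A + B).det) (ρ : n → R) :
    ρ - B *ᵥ ((A + B)⁻¹ *ᵥ ρ) = A *ᵥ ((A + B)⁻¹ *ᵥ ρ) := by
  rw [sub_eq_iff_eq_add, ← add_mulVec, mulVec_mulVec, mul_nonsing_inv _ h, one_mulVec]

variable {n R : Type*} [Fintype n] [Field R] [LinearOrder R] [IsStrictOrderedRing R]

theorem dotProduct_sq_le_dotProduct_self_mul (v w : n → R) :
    (v ⬝ᵥ w) ^ 2 ≤ (v ⬝ᵥ v) * (w ⬝ᵥ w) := by
  simpa only [dotProduct, sq] using Finset.sum_mul_sq_le_sq_mul_sq Finset.univ v w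

theorem dotProduct_self_nonneg (v : n → R) : 0 ≤ v ⬝ᵥ v :=
  Finset.sum_nonneg fun i _ => mul_self_nonneg (v i)

theorem coercive_add_of_posSemidef [StarRing R] [TrivialStar R] {A B : Matrix n n R} {c : R}
    (hA : A.PosSemidef) (hB : ∀ x : n → R, c * (x ⬝ᵥ x) ≤ x ⬝ᵥ (B *ᵥ x)) (x : n → R) :
    c * (x ⬝ᵥ x) ≤ x ⬝ᵥ ((A + B) *ᵥ x) := by
  rw [add_mulVec, dotProduct_add]
  exact le_add_of_nonneg_of_le (by simpa using hA.dotProduct_mulVec_nonneg x) (hB x)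

theorem sq_mul_dotProduct_self_le_of_coercive {M : Matrix n n R} {c : R} (hc : 0 < c)
    (hM : ∀ x : n → R, c * (x ⬝ᵥ x) ≤ x ⬝ᵥ (M *ᵥ x)) (x : n → R) :
    c ^ 2 * (x ⬝ᵥ x) ≤ (M *ᵥ x) ⬝ᵥ (M *ᵥ x) := by
  rcases (dotProduct_self_nonneg x).eq_or_lt with hx | hx
  · rw [← hx, mul_zero]
    exact dotProduct_self_nonneg _
  have hcx : 0 ≤ c * (x ⬝ᵥ x) := by positivity
  have key : (x ⬝ᵥ x) * (c ^ 2 * (x ⬝ᵥ x)) ≤ (x ⬝ᵥ x) * ((M *ᵥ x) ⬝ᵥ (M *ᵥ x)) :=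
    calc (x ⬝ᵥ x) * (c ^ 2 * (x ⬝ᵥ x)) = (c * (x ⬝ᵥ x)) ^ 2 := by ring
      _ ≤ (x ⬝ᵥ (M *ᵥ x)) ^ 2 := pow_le_pow_left₀ hcx (hM x) 2
      _ ≤ (x ⬝ᵥ x) * ((M *ᵥ x) ⬝ᵥ (M *ᵥ x)) := dotProduct_sq_le_dotProduct_self_mul _ _
  exact le_of_mul_le_mul_left key hx

theorem isUnit_det_of_coercive [DecidableEq n] {M : Matrix n n R} {c : R} (hc : 0 < c)
    (hM : ∀ x : n → R, c * (x ⬝ᵥ x) ≤ x ⬝ᵥ (M *ᵥ x)) : IsUnit M.det := by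
  refine isUnit_iff_ne_zero.mpr fun hdet => ?_
  obtain ⟨v, hv, hMv⟩ := exists_mulVec_eq_zero_iff.mpr hdet
  have hle := sq_mul_dotProduct_self_le_of_coercive hc hM v
  rw [hMv, zero_dotProduct] at hle
  have hvv : v ⬝ᵥ v = 0 :=
    le_antisymm (nonpos_of_mul_nonpos_right hle (by positivity)) (dotProduct_self_nonneg v)
  exact hv (dotProduct_self_eq_zero.mp hvv)

end Matrix

theorem factor_residual_variance_bound_general (K : ℕ) (c₀ C₀ C : ℝ)
    (hc₀ : 0 < c₀) (hC : 0 < C) :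
    ∃ C' : ℝ, 0 < C' ∧
      ∀ (p : ℕ) (Λ : Matrix (Fin p) (Fin K) ℝ) (Su : Matrix (Fin p) (Fin p) ℝ)
        (Sf : Matrix (Fin K) (Fin K) ℝ) (ρ : Fin K → ℝ) (ψ : ℝ),
        0 < ψ →
        Su.PosDef →
        (∀ x : Fin K → ℝ, c₀ * ψ * (x ⬝ᵥ x) ≤ x ⬝ᵥ ((Λᵀ * Su⁻¹ * Λ) *ᵥ x)) →
        (∀ x : Fin K → ℝ, x ⬝ᵥ ((Λᵀ * Su⁻¹ * Λ) *ᵥ x) ≤ C₀ * ψ * (x ⬝ᵥ x)) →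
        Sf.PosDef →
        (∀ x : Fin K → ℝ, x ⬝ᵥ (Sf *ᵥ x) ≤ C * (x ⬝ᵥ x)) →
        (∀ x : Fin K → ℝ, x ⬝ᵥ (Sf⁻¹ *ᵥ x) ≤ C * (x ⬝ᵥ x)) →
        ρ ⬝ᵥ ρ ≤ C ^ 2 →
        (let β := Su⁻¹ *ᵥ (Λ *ᵥ ((Sf⁻¹ + Λᵀ * Su⁻¹ * Λ)⁻¹ *ᵥ ρ))
         (ρ - Λᵀ *ᵥ β) ⬝ᵥ (Sf *ᵥ (ρ - Λᵀ *ᵥ β)) ≤ C' / ψ ^ 2) := by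
  refine ⟨C ^ 3 / c₀ ^ 2, by positivity, ?_⟩
  intro p Λ Su Sf ρ ψ hψ _ hlow _ hSf _ hSfinv hρ β
  set A := Λᵀ * Su⁻¹ * Λ
  set w := (Sf⁻¹ + A)⁻¹ *ᵥ ρ
  have hcoer := coercive_add_of_posSemidef hSf.inv.posSemidef hlow
  have hunit := isUnit_det_of_coercive (by positivity) hcoer
  have hres : ρ - Λᵀ *ᵥ β = Sf⁻¹ *ᵥ w := by
    have hβ : Λᵀ *ᵥ β = A *ᵥ w := by simp only [β, w, A, mulVec_mulVec, Matrix.mul_assoc]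
    rw [hβ, sub_mulVec_inv_add_mulVec hunit]
  have hw : (c₀ * ψ) ^ 2 * (w ⬝ᵥ w) ≤ C ^ 2 :=
    calc (c₀ * ψ) ^ 2 * (w ⬝ᵥ w) ≤ ((Sf⁻¹ + A) *ᵥ w) ⬝ᵥ ((Sf⁻¹ + A) *ᵥ w) :=
          sq_mul_dotProduct_self_le_of_coercive (by positivity) hcoer w
      _ = ρ ⬝ᵥ ρ := by rw [mulVec_mulVec, mul_nonsing_inv _ hunit, one_mulVec]
      _ ≤ C ^ 2 := hρ
  rw [hres, mulVec_mulVec w Sf, mul_nonsing_inv _ ((isUnit_iff_isUnit_det Sf).mp hSf.isUnit),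
    one_mulVec, dotProduct_comm]
  calc w ⬝ᵥ (Sf⁻¹ *ᵥ w) ≤ C * (w ⬝ᵥ w) := hSfinv w
    _ ≤ C * (C ^ 2 / (c₀ * ψ) ^ 2) := by
        gcongr
        exact (le_div_iff₀ (by positivity)).mpr (by linarith)
    _ = C ^ 3 / c₀ ^ 2 / ψ ^ 2 := by ring

/-- Bound on the factor-part residual variance `V₁ = (ρ − Λᵀβ)ᵀ Σ_f (ρ − Λᵀβ)`:
under `c₀ψ ≤ σ_min(ΛᵀΣ_u⁻¹Λ)`, `‖ΛᵀΣ_u⁻¹Λ‖ ≤ C₀ψ`, `‖Σ_f‖, ‖Σ_f⁻¹‖ ≤ C`, `‖ρ‖ ≤ C`,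
we have `V₁ ≤ C'/ψ²` with `C'` depending only on `c₀, C₀, C`. -/
theorem factor_residual_variance_bound (K : ℕ) (c₀ C₀ C : ℝ)
    (hc₀ : 0 < c₀) (hC₀ : 0 < C₀) (hC : 0 < C) :
    ∃ C' : ℝ, 0 < C' ∧
      ∀ (p : ℕ) (Λ : Matrix (Fin p) (Fin K) ℝ) (Su : Matrix (Fin p) (Fin p) ℝ)
        (Sf : Matrix (Fin K) (Fin K) ℝ) (ρ : Fin K → ℝ) (ψ : ℝ),
        0 < ψ →
        Su.PosDef →
        (∀ x : Fin K → ℝ, c₀ * ψ * (x ⬝ᵥ x) ≤ x ⬝ᵥ ((Λᵀ * Su⁻¹ * Λ) *ᵥ x)) →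
        (∀ x : Fin K → ℝ, x ⬝ᵥ ((Λᵀ * Su⁻¹ * Λ) *ᵥ x) ≤ C₀ * ψ * (x ⬝ᵥ x)) →
        Sf.PosDef →
        (∀ x : Fin K → ℝ, x ⬝ᵥ (Sf *ᵥ x) ≤ C * (x ⬝ᵥ x)) →
        (∀ x : Fin K → ℝ, x ⬝ᵥ (Sf⁻¹ *ᵥ x) ≤ C * (x ⬝ᵥ x)) →
        ρ ⬝ᵥ ρ ≤ C ^ 2 →
        (let β := Su⁻¹ *ᵥ (Λ *ᵥ ((Sf⁻¹ + Λᵀ * Su⁻¹ * Λ)⁻¹ *ᵥ ρ))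
         (ρ - Λᵀ *ᵥ β) ⬝ᵥ (Sf *ᵥ (ρ - Λᵀ *ᵥ β)) ≤ C' / ψ ^ 2) :=
  factor_residual_variance_bound_general K c₀ C₀ C hc₀ hC
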